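/- arXiv:1104.0350 — 7 statements merged into one kernel-verified Lean document; each statement's English description precedes it below -/
import Mathlib

section
/- Let g ∈ ℝ² be a nonzero vector and H a symmetric positive definite 2×2 real matrix. Then there exists a unique 2×2 matrix M with det M > 0 such that gᵀM = (0, 1) and MᵀHM = diag(1, α) for some α > 0. -/
/-!
The first column `M₀` of such an `M` is orthogonal to `g`, hence equal to `s • perp g` for the
quarter turn `perp g` of `g`, and then `det M = s * (g ⬝ᵥ M₁) = s`; so `s > 0`, and `M₀ᵀ H M₀ = 1`
forces `s = (perp gᵀ H perp g)^(-1/2)`. The second column `M₁` is pinned down by the two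
independent linear conditions `g ⬝ᵥ M₁ = 1` and `perp gᵀ H M₁ = 0`. For existence, `M₁` is the
`H`-Gram–Schmidt correction of `g / |g|²` against `M₀`, and `α = M₁ᵀ H M₁` is positive because
`M₁ ≠ 0`.
-/

open Matrix

theorem Matrix.IsSymm.dotProduct_mulVec_comm {n R : Type*} [Fintype n] [CommSemiring R]
    {H : Matrix n n R} (hH : H.IsSymm) (x y : n → R) :
    x ⬝ᵥ H *ᵥ y = y ⬝ᵥ H *ᵥ x := by
  rw [dotProduct_mulVec, ← mulVec_transpose, hH.eq, dotProduct_comm]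

theorem dotProduct_mulVec_sub_smul_eq_zero {n R : Type*} [Fintype n] [CommRing R]
    {H : Matrix n n R} {e : n → R} (he : e ⬝ᵥ H *ᵥ e = 1) (u : n → R) :
    e ⬝ᵥ H *ᵥ (u - (e ⬝ᵥ H *ᵥ u) • e) = 0 := by
  rw [mulVec_sub, mulVec_smul, dotProduct_sub, dotProduct_smul, he, smul_eq_mul, mul_one,
    sub_self]

section Perp

variable {R : Type*}

def perp [Neg R] (g : Fin 2 → R) : Fin 2 → R := ![g 1, -g 0]

variable [CommRing R]

theorem perp_ne_zero {g : Fin 2 → R} (hg : g ≠ 0) : perp g ≠ 0 := by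
  contrapose! hg
  ext i; fin_cases i
  · simpa [perp] using congrFun hg 1
  · simpa [perp] using congrFun hg 0

theorem dotProduct_perp_self (g : Fin 2 → R) : g ⬝ᵥ perp g = 0 := by
  simp [perp, dotProduct, Fin.sum_univ_two, mul_comm]

theorem dotProduct_self_smul_eq (g u : Fin 2 → R) :
    (g ⬝ᵥ g) • u = (g ⬝ᵥ u) • g + (perp g ⬝ᵥ u) • perp g := by
  ext i; fin_cases i <;> simp [perp, dotProduct, Fin.sum_univ_two] <;> ring

theorem det_fin_two_of_row_zero_eq_smul_perp {g : Fin 2 → R} {s : R}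
    {N : Matrix (Fin 2) (Fin 2) R} (hN : N 0 = s • perp g) : N.det = s * (g ⬝ᵥ N 1) := by
  rw [det_fin_two, show N 0 0 = s * g 1 from congrFun hN 0,
    show N 0 1 = s * -g 0 from congrFun hN 1]
  simp only [dotProduct, Fin.sum_univ_two]
  ring

theorem exists_eq_smul_perp_of_dotProduct_eq_zero {K : Type*} [Field K] [LinearOrder K]
    [IsStrictOrderedRing K] {g u : Fin 2 → K} (hg : g ≠ 0) (hu : g ⬝ᵥ u = 0) :
    ∃ r : K, u = r • perp g := by
  have hgg : g ⬝ᵥ g ≠ 0 := dotProduct_self_eq_zero.not.mpr hg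
  refine ⟨(g ⬝ᵥ g)⁻¹ * (perp g ⬝ᵥ u), ?_⟩
  have h := dotProduct_self_smul_eq g u
  rw [hu, zero_smul, zero_add] at h
  rw [mul_smul, ← h, inv_smul_smul₀ hgg]

end Perp

section LocalFrame

variable {g : Fin 2 → ℝ} {H M M' : Matrix (Fin 2) (Fin 2) ℝ}

def IsLocalFrame (g : Fin 2 → ℝ) (H M : Matrix (Fin 2) (Fin 2) ℝ) : Prop :=
  0 < M.det ∧ g ᵥ* M = ![0, 1] ∧ ∃ α : ℝ, 0 < α ∧ Mᵀ * H * M = diagonal ![1, α]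

theorem isLocalFrame_iff (hH : H.PosDef) :
    IsLocalFrame g H M ↔ 0 < M.det ∧ g ⬝ᵥ Mᵀ 0 = 0 ∧ g ⬝ᵥ Mᵀ 1 = 1 ∧
      Mᵀ 0 ⬝ᵥ H *ᵥ Mᵀ 0 = 1 ∧ Mᵀ 0 ⬝ᵥ H *ᵥ Mᵀ 1 = 0 := by
  have hvec : g ᵥ* M = ![g ⬝ᵥ Mᵀ 0, g ⬝ᵥ Mᵀ 1] := by
    ext i; fin_cases i <;> rfl
  have hform : Mᵀ * H * M = of fun i j => Mᵀ i ⬝ᵥ H *ᵥ Mᵀ j := by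
    ext i j; exact mul_mul_apply ..
  rw [IsLocalFrame, hvec, hform]
  constructor
  · rintro ⟨hdet, hg, α, -, hdiag⟩
    refine ⟨hdet, congrFun hg 0, congrFun hg 1, ?_, ?_⟩
    · simpa using congrFun (congrFun hdiag 0) 0
    · simpa using congrFun (congrFun hdiag 0) 1
  · rintro ⟨hdet, hg₀, hg₁, h₀₀, h₀₁⟩
    have h₁ : Mᵀ 1 ≠ 0 := by
      rintro h
      simp [h] at hg₁
    have hsymm := (isHermitian_iff_isSymm.mp hH.isHermitian).dotProduct_mulVec_comm
    refine ⟨hdet, by rw [hg₀, hg₁], Mᵀ 1 ⬝ᵥ H *ᵥ Mᵀ 1,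
      by simpa using hH.dotProduct_mulVec_pos h₁, ?_⟩
    ext i j
    fin_cases i <;> fin_cases j <;>
      simp only [Fin.zero_eta, Fin.mk_one, of_apply, diagonal_apply_eq, cons_val_zero,
        cons_val_one, ne_eq, zero_ne_one, one_ne_zero, not_false_eq_true, diagonal_apply_ne]
    exacts [h₀₀, h₀₁, (hsymm _ _).trans h₀₁]

theorem perp_dotProduct_mulVec_perp_pos (hg : g ≠ 0) (hH : H.PosDef) :
    0 < perp g ⬝ᵥ H *ᵥ perp g := by
  simpa using hH.dotProduct_mulVec_pos (perp_ne_zero hg)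

theorem eq_of_dotProduct_eq_of_perp_dotProduct_mulVec_eq (hg : g ≠ 0) (hH : H.PosDef)
    {x y : Fin 2 → ℝ} (hgxy : g ⬝ᵥ x = g ⬝ᵥ y)
    (hHxy : perp g ⬝ᵥ H *ᵥ x = perp g ⬝ᵥ H *ᵥ y) : x = y := by
  obtain ⟨r, hr⟩ := exists_eq_smul_perp_of_dotProduct_eq_zero hg
    (show g ⬝ᵥ (x - y) = 0 by rw [dotProduct_sub, hgxy, sub_self])
  have hr0 : r * (perp g ⬝ᵥ H *ᵥ perp g) = 0 := by
    rw [← smul_eq_mul, ← dotProduct_smul, ← mulVec_smul, ← hr, mulVec_sub, dotProduct_sub, hHxy,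
      sub_self]
  rw [← sub_eq_zero, hr, (mul_eq_zero.mp hr0).resolve_right
    (perp_dotProduct_mulVec_perp_pos hg hH).ne', zero_smul]

noncomputable def localFrameCol₀ (g : Fin 2 → ℝ) (H : Matrix (Fin 2) (Fin 2) ℝ) : Fin 2 → ℝ :=
  (√(perp g ⬝ᵥ H *ᵥ perp g))⁻¹ • perp g

noncomputable def localFrameCol₁ (g : Fin 2 → ℝ) (H : Matrix (Fin 2) (Fin 2) ℝ) : Fin 2 → ℝ :=
  (g ⬝ᵥ g)⁻¹ • g - (localFrameCol₀ g H ⬝ᵥ H *ᵥ ((g ⬝ᵥ g)⁻¹ • g)) • localFrameCol₀ g H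

noncomputable def localFrame (g : Fin 2 → ℝ) (H : Matrix (Fin 2) (Fin 2) ℝ) :
    Matrix (Fin 2) (Fin 2) ℝ :=
  (of ![localFrameCol₀ g H, localFrameCol₁ g H])ᵀ

theorem localFrameCol₀_dotProduct_mulVec_self (hg : g ≠ 0) (hH : H.PosDef) :
    localFrameCol₀ g H ⬝ᵥ H *ᵥ localFrameCol₀ g H = 1 := by
  have hQ := perp_dotProduct_mulVec_perp_pos hg hH
  rw [localFrameCol₀, mulVec_smul, dotProduct_smul, smul_dotProduct, smul_eq_mul, smul_eq_mul,
    ← mul_assoc, ← mul_inv, Real.mul_self_sqrt hQ.le, inv_mul_cancel₀ hQ.ne']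

theorem isLocalFrame_localFrame (hg : g ≠ 0) (hH : H.PosDef) :
    IsLocalFrame g H (localFrame g H) := by
  have hgg : g ⬝ᵥ g ≠ 0 := dotProduct_self_eq_zero.not.mpr hg
  have hg₀ : g ⬝ᵥ localFrameCol₀ g H = 0 := by
    rw [localFrameCol₀, dotProduct_smul, dotProduct_perp_self, smul_zero]
  have hg₁ : g ⬝ᵥ localFrameCol₁ g H = 1 := by
    rw [localFrameCol₁, dotProduct_sub, dotProduct_smul, dotProduct_smul, hg₀, smul_zero,
      sub_zero, smul_eq_mul, inv_mul_cancel₀ hgg]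
  have hdet : (localFrame g H).det = (√(perp g ⬝ᵥ H *ᵥ perp g))⁻¹ := by
    rw [localFrame, det_transpose, det_fin_two_of_row_zero_eq_smul_perp rfl]
    exact (congrArg _ hg₁).trans (mul_one _)
  rw [isLocalFrame_iff hH]
  refine ⟨?_, hg₀, hg₁, localFrameCol₀_dotProduct_mulVec_self hg hH,
    dotProduct_mulVec_sub_smul_eq_zero (localFrameCol₀_dotProduct_mulVec_self hg hH) _⟩
  rw [hdet]
  exact inv_pos.mpr (Real.sqrt_pos.mpr (perp_dotProduct_mulVec_perp_pos hg hH))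

theorem IsLocalFrame.col_zero_eq (hg : g ≠ 0) (hH : H.PosDef) (hM : IsLocalFrame g H M) :
    Mᵀ 0 = localFrameCol₀ g H := by
  obtain ⟨hdet, hg₀, hg₁, h₀₀, -⟩ := (isLocalFrame_iff hH).mp hM
  obtain ⟨s, hs⟩ := exists_eq_smul_perp_of_dotProduct_eq_zero hg hg₀
  have hs_det : M.det = s := by
    rw [← det_transpose, det_fin_two_of_row_zero_eq_smul_perp hs, hg₁, mul_one]
  have hs_pos : 0 < s := hs_det ▸ hdet
  have hsQ : √(perp g ⬝ᵥ H *ᵥ perp g) * s = 1 := by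
    rw [hs, mulVec_smul, dotProduct_smul, smul_dotProduct, smul_eq_mul, smul_eq_mul,
      ← mul_assoc, ← pow_two] at h₀₀
    rw [← Real.sqrt_sq hs_pos.le, ← Real.sqrt_mul' _ (sq_nonneg s), mul_comm, h₀₀,
      Real.sqrt_one]
  rw [hs, localFrameCol₀, eq_inv_of_mul_eq_one_right hsQ]

theorem IsLocalFrame.perp_dotProduct_mulVec_col_one (hg : g ≠ 0) (hH : H.PosDef)
    (hM : IsLocalFrame g H M) : perp g ⬝ᵥ H *ᵥ Mᵀ 1 = 0 := by
  obtain ⟨-, -, -, -, h₀₁⟩ := (isLocalFrame_iff hH).mp hM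
  rw [hM.col_zero_eq hg hH, localFrameCol₀, smul_dotProduct, smul_eq_mul] at h₀₁
  exact (mul_eq_zero.mp h₀₁).resolve_left
    (inv_ne_zero (Real.sqrt_pos.mpr (perp_dotProduct_mulVec_perp_pos hg hH)).ne')

theorem IsLocalFrame.unique (hg : g ≠ 0) (hH : H.PosDef) (hM : IsLocalFrame g H M)
    (hM' : IsLocalFrame g H M') : M = M' := by
  rw [← transpose_inj]
  refine funext (Fin.forall_fin_two.mpr ⟨?_, ?_⟩)
  · exact (hM.col_zero_eq hg hH).trans (hM'.col_zero_eq hg hH).symm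
  · refine eq_of_dotProduct_eq_of_perp_dotProduct_mulVec_eq hg hH ?_ ?_
    · exact (congrFun hM.2.1 1).trans (congrFun hM'.2.1 1).symm
    · rw [hM.perp_dotProduct_mulVec_col_one hg hH, hM'.perp_dotProduct_mulVec_col_one hg hH]

end LocalFrame

theorem exists_unique_local_frame_matrix_general
    (g : Fin 2 → ℝ) (hg : g ≠ 0)
    (H : Matrix (Fin 2) (Fin 2) ℝ) (hH : H.PosDef) :
    ∃! M : Matrix (Fin 2) (Fin 2) ℝ,
      0 < M.det ∧ Matrix.vecMul g M = ![0, 1] ∧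
        ∃ α : ℝ, 0 < α ∧ M.transpose * H * M = Matrix.diagonal ![1, α] :=
  existsUnique_of_exists_of_unique ⟨localFrame g H, isLocalFrame_localFrame hg hH⟩
    fun _ _ hM hM' ↦ IsLocalFrame.unique hg hH hM hM'

/-- For a nonzero vector `g` and a symmetric positive definite `2 × 2` matrix `H`,
there exists a unique `2 × 2` matrix `M` with `det M > 0` such that `gᵀ M = (0, 1)`
and `Mᵀ H M = diag(1, α)` for some `α > 0`. -/
theorem exists_unique_local_frame_matrix
    (g : Fin 2 → ℝ) (hg : g ≠ 0)
    (H : Matrix (Fin 2) (Fin 2) ℝ) (hsymm : H.IsSymm) (hH : H.PosDef) :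
    ∃! M : Matrix (Fin 2) (Fin 2) ℝ,
      0 < M.det ∧ Matrix.vecMul g M = ![0, 1] ∧
        ∃ α : ℝ, 0 < α ∧ M.transpose * H * M = Matrix.diagonal ![1, α] :=
  exists_unique_local_frame_matrix_general g hg H hH
end

section
/- Let H be a symmetric positive semidefinite singular 2×2 matrix and g a nonzero vector with g ∈ range(H). Then there is no 2×2 matrix M satisfying gᵀM = (0,1) and MᵀHM = diag(1, α) for some α > 0. (In particular, H times the 90°-clockwise rotation of g is zero, contradicting the required normalization of the first column of M.) -/
/-- If `H` is symmetric positive semidefinite and singular, and `g ≠ 0` lies in the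
range of `H`, then no matrix `M` satisfies `gᵀ M = (0,1)` and `Mᵀ H M = diag(1, α)`
with `α > 0`. -/
theorem no_local_frame_matrix_of_singular_hessian
    (H : Matrix (Fin 2) (Fin 2) ℝ) (hsymm : H.IsSymm) (hH : H.PosSemidef)
    (hdet : H.det = 0)
    (g : Fin 2 → ℝ) (hg : g ≠ 0) (hrange : ∃ w : Fin 2 → ℝ, H.mulVec w = g) :
    ¬ ∃ M : Matrix (Fin 2) (Fin 2) ℝ, Matrix.vecMul g M = ![0, 1] ∧
        ∃ α : ℝ, 0 < α ∧ M.transpose * H * M = Matrix.diagonal ![1, α] := by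
  rintro ⟨M, hgM, α, hα, hM⟩
  have h := congrArg Matrix.det hM
  simp [Matrix.det_mul, hdet, Matrix.det_diagonal, Fin.prod_univ_two] at h
  linarith
end

section
/- Let f : ℝ² → ℝ be strictly convex. If p₁, p₂, p₃ ∈ ℝ² are the vertices of a triangle ordered so that f(p₁) ≤ f(p₂) ≤ f(p₃), and p_in = ¼(p₁+p₂) + ½p₃ is the inside contraction point, then f(p_in) < f(p₃); in particular no Nelder-Mead shrink step can occur at an inside contraction when f is strictly convex, provided the three vertex values are not all equal and the vertices are affinely independent. -/
/-- For a strictly convex function on ℝ², the inside contraction point has strictly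
smaller function value than the worst vertex. -/
theorem inside_contraction_strict_decrease
    (f : ℝ × ℝ → ℝ) (hf : StrictConvexOn ℝ Set.univ f)
    (p₁ p₂ p₃ : ℝ × ℝ)
    (hind : AffineIndependent ℝ ![p₁, p₂, p₃])
    (h12 : f p₁ ≤ f p₂) (h23 : f p₂ ≤ f p₃) (hne : f p₁ ≠ f p₃) :
    f ((1 / 4 : ℝ) • (p₁ + p₂) + (1 / 2 : ℝ) • p₃) < f p₃ := by
  set m : ℝ × ℝ := (1 / 2 : ℝ) • p₁ + (1 / 2 : ℝ) • p₂ with hm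
  have hnot_col : ¬ Collinear ℝ ({p₁, p₂, p₃} : Set (ℝ × ℝ)) :=
    affineIndependent_iff_not_collinear_set.mp hind
  have h12ne : p₁ ≠ p₂ := fun h => by
    have := hind.injective (a₁ := 0) (a₂ := 1) (by simpa using h)
    simp at this
  have hmne : m ≠ p₃ := by
    intro h
    apply hnot_col
    have hmem : m ∈ line[ℝ, p₁, p₂] := by
      have : m = AffineMap.lineMap p₁ p₂ (1/2 : ℝ) := by
        simp [AffineMap.lineMap_apply, hm]; module
      rw [this]; exact AffineMap.lineMap_mem_affineSpan_pair _ _ _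
    have hc : Collinear ℝ ({m, p₁, p₂} : Set (ℝ × ℝ)) :=
      collinear_insert_of_mem_affineSpan_pair hmem
    rw [h] at hc
    convert hc using 1
    ext x; simp; tauto
  have hmlt : f m < f p₃ := by
    have := hf.2 (Set.mem_univ p₁) (Set.mem_univ p₂) h12ne
      (by norm_num : (0:ℝ) < 1/2) (by norm_num : (0:ℝ) < 1/2) (by norm_num)
    have h13 : f p₁ < f p₃ := lt_of_le_of_ne (h12.trans h23) hne
    calc f m < (1/2) * f p₁ + (1/2) * f p₂ := this
      _ < f p₃ := by nlinarith
  have key := hf.2 (Set.mem_univ m) (Set.mem_univ p₃) hmne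
    (by norm_num : (0:ℝ) < 1/2) (by norm_num : (0:ℝ) < 1/2) (by norm_num)
  have heq : (1 / 4 : ℝ) • (p₁ + p₂) + (1 / 2 : ℝ) • p₃
      = (1/2 : ℝ) • m + (1/2 : ℝ) • p₃ := by
    rw [hm]; module
  rw [heq]
  calc f ((1/2 : ℝ) • m + (1/2 : ℝ) • p₃) < (1/2) * f m + (1/2) * f p₃ := key
    _ < f p₃ := by linarith
end

section
/- Consider the triangle Δ₀ with vertices A₀ = (−1, −u), B₀ = (s, t), C₀ = (1, u), where 0 ≤ s ≤ 1.00001, and let Δ₁ be its inside contraction replacing A₀, with vertices A₁ = (¼s − ¼, ¼t − ¼u), B₀, C₀. Then the width (max pairwise difference of first coordinates) satisfies width(Δ₀)/width(Δ₁) ≥ 8/5. -/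
/-!
The contracted vertex has first coordinate `(s - 1) / 4`, so the three first-coordinate gaps of
Δ₁ are `(3s + 1) / 4`, `(5 - s) / 4` and `|s - 1|`, while the width of Δ₀ is at least both `2`
and `1 + s`. For `0 ≤ s ≤ 3` each gap is at most `5 / 8` of one of these bounds, so
`width(Δ₁) ≤ 5/8 · width(Δ₀)`.
-/

/-- Width of a triple of points: max pairwise absolute difference of first coordinates. -/
noncomputable def triWidth (a b c : ℝ × ℝ) : ℝ :=
  max (max |a.1 - b.1| |a.1 - c.1|) |b.1 - c.1|

theorem triWidth_le_iff {a b c : ℝ × ℝ} {w : ℝ} :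
    triWidth a b c ≤ w ↔ |a.1 - b.1| ≤ w ∧ |a.1 - c.1| ≤ w ∧ |b.1 - c.1| ≤ w := by
  simp only [triWidth, max_le_iff, and_assoc]

theorem abs_fst_sub_fst_le_triWidth₁₂ (a b c : ℝ × ℝ) : |a.1 - b.1| ≤ triWidth a b c :=
  (le_max_left _ _).trans (le_max_left _ _)

theorem abs_fst_sub_fst_le_triWidth₁₃ (a b c : ℝ × ℝ) : |a.1 - c.1| ≤ triWidth a b c :=
  (le_max_right _ _).trans (le_max_left _ _)

section insideContraction

variable (s t u : ℝ)

theorem one_add_le_triWidth_initial : 1 + s ≤ triWidth ((-1 : ℝ), -u) (s, t) ((1 : ℝ), u) :=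
  calc 1 + s ≤ |(-1 : ℝ) - s| := by rw [abs_sub_comm]; exact le_abs.mpr (Or.inl (by linarith))
    _ ≤ _ := abs_fst_sub_fst_le_triWidth₁₂ (-1, -u) (s, t) (1, u)

theorem two_le_triWidth_initial : 2 ≤ triWidth ((-1 : ℝ), -u) (s, t) ((1 : ℝ), u) :=
  calc (2 : ℝ) = |(-1 : ℝ) - 1| := by norm_num
    _ ≤ _ := abs_fst_sub_fst_le_triWidth₁₃ (-1, -u) (s, t) (1, u)

theorem triWidth_contracted_pos (hs : s < 5) :
    0 < triWidth (s / 4 - 1 / 4, t / 4 - u / 4) (s, t) ((1 : ℝ), u) :=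
  calc (0 : ℝ) < |(s / 4 - 1 / 4) - 1| := abs_pos.mpr (by intro h; linarith)
    _ ≤ _ := abs_fst_sub_fst_le_triWidth₁₃ (s / 4 - 1 / 4, t / 4 - u / 4) (s, t) (1, u)

theorem triWidth_contracted_le (hs0 : 0 ≤ s) (hs3 : s ≤ 3) :
    triWidth (s / 4 - 1 / 4, t / 4 - u / 4) (s, t) ((1 : ℝ), u) ≤
      5 / 8 * triWidth ((-1 : ℝ), -u) (s, t) ((1 : ℝ), u) := by
  have h₁ := one_add_le_triWidth_initial s t u
  have h₂ := two_le_triWidth_initial s t u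
  refine triWidth_le_iff.mpr ⟨?_, ?_, ?_⟩ <;> refine abs_le.mpr ⟨?_, ?_⟩ <;> linarith

end insideContraction

/-- For the triangle Δ₀ with vertices `(−1, −u)`, `(s, t)`, `(1, u)` with
`0 ≤ s ≤ 1.00001`, if Δ₁ is its inside contraction replacing `(−1, −u)`, then
`width(Δ₀)/width(Δ₁) ≥ 8/5`. -/
theorem width_ratio_after_inside_contraction
    (s t u : ℝ) (hs0 : 0 ≤ s) (hs1 : s ≤ 1.00001) :
    triWidth ((-1 : ℝ), -u) (s, t) ((1 : ℝ), u) /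
        triWidth (s / 4 - 1 / 4, t / 4 - u / 4) (s, t) ((1 : ℝ), u) ≥ 8 / 5 := by
  have hs3 : s ≤ 3 := hs1.trans (by norm_num)
  have hpos := triWidth_contracted_pos s t u (by linarith)
  have hle := triWidth_contracted_le s t u hs0 hs3
  rw [ge_iff_le, le_div_iff₀ hpos]
  linarith
end

section
/- Define the flatness of a nondegenerate triangle in ℝ² as Γ(Δ) = area(Δ)/width(Δ)³, where width is the maximum pairwise absolute difference of first coordinates of vertices. For the triangle Δ₀ with vertices (−1,−u), (s,t), (1,u) with 0 ≤ s ≤ 1.00001 and nonzero area, and Δ₁ its inside contraction replacing the vertex (−1,−u) (so Δ₁ has vertices (¼s−¼, ¼t−¼u), (s,t), (1,u)), we have Γ(Δ₁) > 1.01·Γ(Δ₀). -/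
/-- Unsigned area of the triangle with vertices `a`, `b`, `c` in ℝ². -/
noncomputable def triArea (a b c : ℝ × ℝ) : ℝ :=
  |(b.1 - a.1) * (c.2 - a.2) - (b.2 - a.2) * (c.1 - a.1)| / 2

/-- Flatness of a triangle: area divided by the cube of the width. -/
noncomputable def triFlat (a b c : ℝ × ℝ) : ℝ :=
  triArea a b c / (triWidth a b c) ^ 3

/-- For the triangle Δ₀ with vertices `(−1,−u)`, `(s,t)`, `(1,u)`, `0 ≤ s ≤ 1.00001`,
the inside contraction Δ₁ replacing `(−1,−u)` increases the flatness by a factor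
greater than `1.01`. -/
theorem flatness_increases_after_inside_contraction
    (s t u : ℝ) (hs0 : 0 ≤ s) (hs1 : s ≤ 1.00001)
    (hind : AffineIndependent ℝ ![((-1 : ℝ), -u), (s, t), ((1 : ℝ), u)]) :
    triFlat (s / 4 - 1 / 4, t / 4 - u / 4) (s, t) ((1 : ℝ), u) >
      1.01 * triFlat ((-1 : ℝ), -u) (s, t) ((1 : ℝ), u) := by
  -- First: the area quantity is nonzero, from affine independence.
  have hA : s * u - t ≠ 0 := by
    intro h
    have ht : t = s * u := by linarith
    rw [affineIndependent_iff_not_collinear_set] at hind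
    apply hind
    apply collinear_iff_of_mem (Set.mem_insert _ _) |>.2
    refine ⟨((1 : ℝ), u), ?_⟩
    rintro p hp
    simp only [Set.mem_insert_iff, Set.mem_singleton_iff] at hp
    rcases hp with rfl | rfl | rfl
    · exact ⟨0, by simp⟩
    · exact ⟨s + 1, by simp [Prod.ext_iff, ht]; ring⟩
    · exact ⟨2, by simp [Prod.ext_iff]; constructor <;> ring⟩
  set A : ℝ := |s * u - t| with hAdef
  have hApos : 0 < A := abs_pos.2 hA
  -- areas
  have harea0 : triArea ((-1 : ℝ), -u) (s, t) ((1 : ℝ), u) = A := by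
    have : (s - (-1)) * (u - (-u)) - (t - (-u)) * ((1 : ℝ) - (-1)) = 2 * (s * u - t) := by
      ring
    rw [triArea]
    simp only []
    rw [this, abs_mul]
    norm_num [hAdef]
  have harea1 : triArea (s / 4 - 1 / 4, t / 4 - u / 4) (s, t) ((1 : ℝ), u) = A / 2 := by
    have : (s - (s / 4 - 1 / 4)) * (u - (t / 4 - u / 4)) -
        (t - (t / 4 - u / 4)) * ((1 : ℝ) - (s / 4 - 1 / 4)) = s * u - t := by
      ring
    rw [triArea]
    simp only []
    rw [this]
  -- widths
  have hw0 : (2 : ℝ) ≤ triWidth ((-1 : ℝ), -u) (s, t) ((1 : ℝ), u) := by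
    rw [triWidth]
    have : |(-1 : ℝ) - 1| = 2 := by norm_num
    calc (2 : ℝ) = |(-1 : ℝ) - 1| := by norm_num
      _ ≤ max |(-1 : ℝ) - s| |(-1 : ℝ) - 1| := le_max_right _ _
      _ ≤ _ := le_max_left _ _
  set w1 := triWidth (s / 4 - 1 / 4, t / 4 - u / 4) (s, t) ((1 : ℝ), u) with hw1def
  have hw1ub : w1 ≤ 5 / 4 := by
    rw [hw1def, triWidth]
    have h1 : |(s / 4 - 1 / 4) - s| ≤ 5 / 4 := by
      rw [abs_le]; constructor <;> nlinarith
    have h2 : |(s / 4 - 1 / 4) - 1| ≤ 5 / 4 := by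
      rw [abs_le]; constructor <;> nlinarith
    have h3 : |s - (1 : ℝ)| ≤ 5 / 4 := by
      rw [abs_le]; constructor <;> nlinarith
    exact max_le (max_le h1 h2) h3
  have hw1lb : (1 / 4 : ℝ) ≤ w1 := by
    rw [hw1def, triWidth]
    have h1 : (1 / 4 : ℝ) ≤ |(s / 4 - 1 / 4) - s| := by
      rw [abs_sub_comm, le_abs]
      left; nlinarith
    calc (1 / 4 : ℝ) ≤ |(s / 4 - 1 / 4) - s| := h1
      _ ≤ max |(s / 4 - 1 / 4) - s| |(s / 4 - 1 / 4) - 1| := le_max_left _ _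
      _ ≤ _ := le_max_left _ _
  have hw1pos : (0 : ℝ) < w1 := lt_of_lt_of_le (by norm_num) hw1lb
  set w0 := triWidth ((-1 : ℝ), -u) (s, t) ((1 : ℝ), u) with hw0def
  have hw0pos : (0 : ℝ) < w0 := lt_of_lt_of_le (by norm_num) hw0
  -- combine
  rw [triFlat, triFlat, ← hw0def, ← hw1def, harea0, harea1]
  have h8 : (8 : ℝ) ≤ w0 ^ 3 := by
    calc (8 : ℝ) = 2 ^ 3 := by norm_num
      _ ≤ w0 ^ 3 := pow_le_pow_left₀ (by norm_num) hw0 3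
  have hcube : w1 ^ 3 ≤ 125 / 64 := by
    calc w1 ^ 3 ≤ (5 / 4) ^ 3 := pow_le_pow_left₀ hw1pos.le hw1ub 3
      _ = 125 / 64 := by norm_num
  have hA8 : 1.01 * (A / w0 ^ 3) ≤ 1.01 * (A / 8) := by
    gcongr
  have hlow : (A / 2) / (125 / 64) ≤ (A / 2) / w1 ^ 3 := by
    gcongr
  have : 1.01 * (A / 8) < (A / 2) / (125 / 64) := by
    rw [div_div_eq_mul_div]
    nlinarith
  linarith
end

section
/- If the only nonnegative vector γ satisfying Nᵀγ = 0 is γ = 0, then the system N z ≥ d is feasible for every right-hand side d. -/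
/-!
Gordan's alternative: if no nontrivial nonnegative combination of the rows of `N` vanishes, then
`0` lies outside the convex hull of the rows, and a separating functional yields `z` with
`N z > 0` componentwise. A large enough multiple of such a `z` dominates any right-hand side.
-/

open Matrix

theorem exists_strongDual_forall_pos_of_trivial_nonneg_combination {ι E : Type*} [Fintype ι]
    [TopologicalSpace E] [AddCommGroup E] [Module ℝ E] [IsTopologicalAddGroup E]
    [ContinuousSMul ℝ E] [LocallyConvexSpace ℝ E] [T2Space E] {v : ι → E}
    (hv : ∀ w : ι → ℝ, (∀ i, 0 ≤ w i) → ∑ i, w i • v i = 0 → w = 0) :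
    ∃ f : StrongDual ℝ E, ∀ i, 0 < f (v i) := by
  classical
  set L := Fintype.linearCombination ℝ v
  -- `K` is the convex hull of the `v i`
  set K := L '' stdSimplex ℝ ι
  have hK_compact : IsCompact K :=
    (isCompact_stdSimplex ℝ ι).image (LinearMap.continuous_of_finiteDimensional L)
  have hK_zero : (0 : E) ∉ K := by
    rintro ⟨w, ⟨hw_nonneg, hw_sum⟩, hw⟩
    rw [hv w hw_nonneg (by simpa [L, Fintype.linearCombination_apply] using hw)] at hw_sum
    simp at hw_sum
  obtain ⟨f, u, hfu, hf⟩ := geometric_hahn_banach_point_closed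
    ((convex_stdSimplex ℝ ι).linear_image L) hK_compact.isClosed hK_zero
  refine ⟨f, fun i => ?_⟩
  have hv_mem : v i ∈ K :=
    ⟨Pi.single i 1, single_mem_stdSimplex ℝ i, by simp [L, Fintype.linearCombination_apply_single]⟩
  simpa using hfu.trans (hf _ hv_mem)

theorem Matrix.mulVec_linearMap_single_apply {R m n : Type*} [CommSemiring R] [Fintype n]
    [DecidableEq n] (N : Matrix m n R) (f : (n → R) →ₗ[R] R) (i : m) :
    (N *ᵥ fun j => f (Pi.single j 1)) i = f (N i) := by
  rw [LinearMap.pi_apply_eq_sum_univ f (N i)]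
  simp only [mulVec, dotProduct, smul_eq_mul]
  congr! 3 with j
  ext k
  simp [Pi.single_apply, eq_comm]

theorem Matrix.exists_mulVec_pos_of_trivial_nonneg_kernel {m n : Type*} [Fintype m] [Fintype n]
    (N : Matrix m n ℝ) (h : ∀ γ : m → ℝ, (∀ i, 0 ≤ γ i) → γ ᵥ* N = 0 → γ = 0) :
    ∃ z : n → ℝ, ∀ i, 0 < (N *ᵥ z) i := by
  classical
  obtain ⟨f, hf⟩ := exists_strongDual_forall_pos_of_trivial_nonneg_combination (v := fun i => N i)
    fun γ hγ hγN => h γ hγ (by rwa [vecMul_eq_sum])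
  exact ⟨_, fun i => (N.mulVec_linearMap_single_apply f.toLinearMap i).symm ▸ hf i⟩

theorem Matrix.exists_le_mulVec_smul_of_mulVec_pos {𝕜 m n : Type*} [Field 𝕜] [LinearOrder 𝕜]
    [IsStrictOrderedRing 𝕜] [Fintype m] [Fintype n] (N : Matrix m n 𝕜) {z : n → 𝕜}
    (hz : ∀ i, 0 < (N *ᵥ z) i) (d : m → 𝕜) :
    ∃ t : 𝕜, ∀ i, d i ≤ (N *ᵥ (t • z)) i := by
  refine ⟨∑ k, |d k| / (N *ᵥ z) k, fun i => ?_⟩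
  have ht : |d i| / (N *ᵥ z) i ≤ ∑ k, |d k| / (N *ᵥ z) k :=
    Finset.single_le_sum (fun k _ => div_nonneg (abs_nonneg _) (hz k).le) (Finset.mem_univ i)
  calc d i ≤ |d i| := le_abs_self _
    _ = |d i| / (N *ᵥ z) i * (N *ᵥ z) i := (div_mul_cancel₀ _ (hz i).ne').symm
    _ ≤ (∑ k, |d k| / (N *ᵥ z) k) * (N *ᵥ z) i := mul_le_mul_of_nonneg_right ht (hz i).le
    _ = (N *ᵥ (_ • z)) i := by rw [mulVec_smul, Pi.smul_apply, smul_eq_mul]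

/-- If the only nonnegative `γ` with `Nᵀ γ = 0` is `γ = 0`, then `N z ≥ d` is
feasible for every right-hand side `d`. -/
theorem feasible_of_trivial_nonneg_kernel
    (m n : ℕ) (N : Matrix (Fin m) (Fin n) ℝ)
    (h : ∀ γ : Fin m → ℝ, (∀ i, 0 ≤ γ i) → Matrix.vecMul γ N = 0 → γ = 0) :
    ∀ d : Fin m → ℝ, ∃ z : Fin n → ℝ, ∀ i, d i ≤ N.mulVec z i := by
  intro d
  obtain ⟨z, hz⟩ := N.exists_mulVec_pos_of_trivial_nonneg_kernel h
  obtain ⟨t, ht⟩ := N.exists_le_mulVec_smul_of_mulVec_pos hz d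
  exact ⟨t • z, ht⟩
end

section
/- The McKinnon function f_m(x,y) = 2400|x|³ + y + y² for x ≤ 0 and 6x³ + y + y² for x ≥ 0 is twice continuously differentiable on ℝ², strictly convex, its Hessian is positive definite at every point with x ≠ 0, and its Hessian at points with x = 0 is positive semidefinite and singular. -/
/-!
The function separates as `c x + (y + y²)` with `c x = -2400 x³` for `x ≤ 0` and `6 x³` for
`x ≥ 0`. The two cubic branches agree at `0` to second order (everything vanishes there), so `c`
is `C²` with `c'' x = -14400 x` or `36 x`: positive for `x ≠ 0` and zero at `0`. Hence `c'` is
strictly increasing, making `c` strictly convex, and the Hessian is `diag (c'' x, 2)`.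
-/

/-- The McKinnon function `f_m(x,y) = 2400|x|³ + y + y²` for `x ≤ 0`,
`6x³ + y + y²` for `x ≥ 0`. -/
noncomputable def mckinnon (p : ℝ × ℝ) : ℝ :=
  (if p.1 ≤ 0 then 2400 * |p.1| ^ 3 else 6 * p.1 ^ 3) + p.2 + p.2 ^ 2

/-- The second derivative (Hessian bilinear form) of a function at a point. -/
noncomputable def hess (f : ℝ × ℝ → ℝ) (p v w : ℝ × ℝ) : ℝ :=
  fderiv ℝ (fun q => fderiv ℝ f q v) p w

open Set

theorem hasDerivAt_if_le {f g f' g' : ℝ → ℝ} {a : ℝ} (hf : ∀ x, HasDerivAt f (f' x) x)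
    (hg : ∀ x, HasDerivAt g (g' x) x) (hfg : f a = g a) (hfg' : f' a = g' a) (x : ℝ) :
    HasDerivAt (fun y => if y ≤ a then f y else g y) (if x ≤ a then f' x else g' x) x := by
  rcases lt_trichotomy x a with hx | rfl | hx
  · rw [if_pos hx.le]
    refine (hf x).congr_of_eventuallyEq ?_
    filter_upwards [Iio_mem_nhds hx] with y hy
    exact if_pos (le_of_lt hy)
  · rw [if_pos le_rfl]
    have left : HasDerivWithinAt (fun y => if y ≤ x then f y else g y) (f' x) (Iic x) x :=
      (hf x).hasDerivWithinAt.congr (fun y hy => if_pos hy) (if_pos le_rfl)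
    have right : HasDerivWithinAt (fun y => if y ≤ x then f y else g y) (f' x) (Ici x) x := by
      rw [hfg']
      refine (hg x).hasDerivWithinAt.congr (fun y hy => ?_) (by rw [if_pos le_rfl, hfg])
      split_ifs with hyx
      · rw [le_antisymm hyx hy, hfg]
      · rfl
    simpa only [Iic_union_Ici, hasDerivWithinAt_univ] using left.union right
  · rw [if_neg hx.not_ge]
    refine (hg x).congr_of_eventuallyEq ?_
    filter_upwards [Ioi_mem_nhds hx] with y hy
    exact if_neg (not_le.2 hy)

theorem contDiff_two_of_hasDerivAt {f f' f'' : ℝ → ℝ} (hf : ∀ x, HasDerivAt f (f' x) x)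
    (hf' : ∀ x, HasDerivAt f' (f'' x) x) (hf'' : Continuous f'') : ContDiff ℝ 2 f := by
  have hderiv : deriv f = f' := funext fun x => (hf x).deriv
  have hderiv' : deriv f' = f'' := funext fun x => (hf' x).deriv
  rw [show (2 : WithTop ℕ∞) = 1 + 1 from rfl, contDiff_succ_iff_deriv, hderiv,
    contDiff_one_iff_deriv, hderiv']
  exact ⟨fun x => (hf x).differentiableAt, by simp, fun x => (hf' x).differentiableAt, hf''⟩

theorem StrictConvexOn.fst_add_snd {𝕜 E F : Type*}
    [Field 𝕜] [LinearOrder 𝕜] [IsStrictOrderedRing 𝕜]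
    [AddCommGroup E] [Module 𝕜 E] [AddCommGroup F] [Module 𝕜 F]
    {s : Set E} {t : Set F} {f : E → 𝕜} {g : F → 𝕜}
    (hf : StrictConvexOn 𝕜 s f) (hg : StrictConvexOn 𝕜 t g) :
    StrictConvexOn 𝕜 (s ×ˢ t) (fun p => f p.1 + g p.2) := by
  refine ⟨hf.1.prod hg.1, fun p hp q hq hpq a b ha hb hab => ?_⟩
  simp only [Prod.smul_fst, Prod.smul_snd, Prod.fst_add, Prod.snd_add, smul_eq_mul]
  by_cases h1 : p.1 = q.1
  · have h2 : p.2 ≠ q.2 := fun h => hpq (Prod.ext h1 h)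
    have hF := hf.convexOn.2 hp.1 hq.1 ha.le hb.le hab
    have hG := hg.2 hp.2 hq.2 h2 ha hb hab
    simp only [smul_eq_mul] at hF hG
    linarith
  · have hF := hf.2 hp.1 hq.1 h1 ha hb hab
    have hG := hg.convexOn.2 hp.2 hq.2 ha.le hb.le hab
    simp only [smul_eq_mul] at hF hG
    linarith

theorem hess_fst_add_snd {f f' g g' : ℝ → ℝ} {p : ℝ × ℝ} {a b : ℝ}
    (hf : ∀ x, HasDerivAt f (f' x) x) (hg : ∀ y, HasDerivAt g (g' y) y)
    (hf' : HasDerivAt f' a p.1) (hg' : HasDerivAt g' b p.2) (v w : ℝ × ℝ) :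
    hess (fun q => f q.1 + g q.2) p v w = a * v.1 * w.1 + b * v.2 * w.2 := by
  have hfderiv (q : ℝ × ℝ) :
      fderiv ℝ (fun q => f q.1 + g q.2) q v = f' q.1 * v.1 + g' q.2 * v.2 := by
    have h : HasFDerivAt (fun q : ℝ × ℝ => f q.1 + g q.2) _ q :=
      ((hf q.1).comp_hasFDerivAt q hasFDerivAt_fst).add
        ((hg q.2).comp_hasFDerivAt (𝕜 := ℝ) q hasFDerivAt_snd)
    simp [h.fderiv]
  have h : HasFDerivAt (fun q : ℝ × ℝ => f' q.1 * v.1 + g' q.2 * v.2) _ p :=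
    ((hf'.mul_const v.1).comp_hasFDerivAt p hasFDerivAt_fst).add
      ((hg'.mul_const v.2).comp_hasFDerivAt (𝕜 := ℝ) p hasFDerivAt_snd)
  unfold hess
  simp_rw [hfderiv]
  simp [h.fderiv]

noncomputable def cubicSpline (a b x : ℝ) : ℝ := if x ≤ 0 then a * x ^ 3 else b * x ^ 3

section cubicSpline

variable {a b : ℝ}

theorem hasDerivAt_cubicSpline (x : ℝ) :
    HasDerivAt (cubicSpline a b) (if x ≤ 0 then 3 * a * x ^ 2 else 3 * b * x ^ 2) x := by
  apply hasDerivAt_if_le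
  · exact fun y => ((hasDerivAt_pow 3 y).const_mul a).congr_deriv (by push_cast; ring)
  · exact fun y => ((hasDerivAt_pow 3 y).const_mul b).congr_deriv (by push_cast; ring)
  all_goals simp

theorem hasDerivAt_cubicSpline_deriv (x : ℝ) :
    HasDerivAt (fun x => if x ≤ 0 then 3 * a * x ^ 2 else 3 * b * x ^ 2)
      (if x ≤ 0 then 6 * a * x else 6 * b * x) x := by
  apply hasDerivAt_if_le
  · exact fun y => ((hasDerivAt_pow 2 y).const_mul (3 * a)).congr_deriv (by push_cast; ring)
  · exact fun y => ((hasDerivAt_pow 2 y).const_mul (3 * b)).congr_deriv (by push_cast; ring)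
  all_goals simp

theorem contDiff_cubicSpline : ContDiff ℝ 2 (cubicSpline a b) :=
  contDiff_two_of_hasDerivAt hasDerivAt_cubicSpline hasDerivAt_cubicSpline_deriv
    (Continuous.if_le (by fun_prop) (by fun_prop) continuous_id continuous_const
      (fun x hx => by simp [hx]))

theorem strictConvexOn_cubicSpline (ha : a < 0) (hb : 0 < b) :
    StrictConvexOn ℝ univ (cubicSpline a b) := by
  refine StrictMono.strictConvexOn_univ_of_deriv contDiff_cubicSpline.continuous ?_
  rw [funext fun x => (hasDerivAt_cubicSpline (a := a) (b := b) x).deriv]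
  intro x y hxy
  dsimp only
  -- `3 a y² - 3 a x² = 3 a (y - x) (y + x)` on the left branch, likewise with `b` on the right
  split_ifs with hx hy hy
  · nlinarith [mul_pos (mul_pos (neg_pos.2 ha) (sub_pos.2 hxy)) (by linarith : 0 < -(x + y))]
  · nlinarith [mul_pos hb (pow_pos (not_le.1 hy) 2), mul_nonneg (neg_nonneg.2 ha.le) (sq_nonneg x)]
  · exact absurd (hxy.le.trans hy) hx
  · nlinarith [mul_pos (mul_pos hb (sub_pos.2 hxy)) (by linarith : 0 < x + y)]

end cubicSpline

theorem mckinnon_eq_cubicSpline :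
    mckinnon = fun p => cubicSpline (-2400) 6 p.1 + (p.2 + p.2 ^ 2) := by
  funext p
  unfold mckinnon cubicSpline
  split_ifs with h
  · rw [abs_of_nonpos h]; ring
  · ring

theorem contDiff_mckinnon : ContDiff ℝ 2 mckinnon := by
  rw [mckinnon_eq_cubicSpline]
  exact (contDiff_cubicSpline.comp contDiff_fst).add (by fun_prop)

theorem strictConvexOn_mckinnon : StrictConvexOn ℝ univ mckinnon := by
  rw [mckinnon_eq_cubicSpline, ← univ_prod_univ]
  exact (strictConvexOn_cubicSpline (by norm_num) (by norm_num)).fst_add_snd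
    ((convexOn_id convex_univ).add_strictConvexOn (Even.strictConvexOn_pow even_two two_ne_zero))

theorem hess_mckinnon (p v w : ℝ × ℝ) : hess mckinnon p v w =
    (if p.1 ≤ 0 then -14400 * p.1 else 36 * p.1) * v.1 * w.1 + 2 * v.2 * w.2 := by
  have hquad (y : ℝ) : HasDerivAt (fun y => y + y ^ 2) (1 + 2 * y) y :=
    ((hasDerivAt_id' y).add (hasDerivAt_pow 2 y)).congr_deriv (by ring)
  have hquad' : HasDerivAt (fun y => 1 + 2 * y) 2 p.2 := by
    simpa using ((hasDerivAt_id p.2).const_mul 2).const_add 1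
  rw [mckinnon_eq_cubicSpline,
    hess_fst_add_snd hasDerivAt_cubicSpline hquad (hasDerivAt_cubicSpline_deriv _) hquad']
  norm_num

theorem diagonal_form_pos {c d : ℝ} (hc : 0 < c) (hd : 0 < d) {v : ℝ × ℝ} (hv : v ≠ 0) :
    0 < c * v.1 * v.1 + d * v.2 * v.2 := by
  have hv' : v.1 ≠ 0 ∨ v.2 ≠ 0 := by
    contrapose! hv
    exact Prod.ext hv.1 hv.2
  rcases hv' with h | h
  · nlinarith [mul_pos hc (mul_self_pos.2 h), mul_nonneg hd.le (mul_self_nonneg v.2)]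
  · nlinarith [mul_nonneg hc.le (mul_self_nonneg v.1), mul_pos hd (mul_self_pos.2 h)]

/-- The McKinnon function is C², strictly convex, its Hessian is positive definite
at points with `x ≠ 0`, and at points with `x = 0` the Hessian is positive
semidefinite and singular. -/
theorem mckinnon_properties :
    ContDiff ℝ 2 mckinnon ∧
    StrictConvexOn ℝ Set.univ mckinnon ∧
    (∀ p : ℝ × ℝ, p.1 ≠ 0 → ∀ v : ℝ × ℝ, v ≠ 0 → 0 < hess mckinnon p v v) ∧
    (∀ p : ℝ × ℝ, p.1 = 0 →
      (∀ v : ℝ × ℝ, 0 ≤ hess mckinnon p v v) ∧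
      ∃ v : ℝ × ℝ, v ≠ 0 ∧ ∀ w : ℝ × ℝ, hess mckinnon p v w = 0) := by
  refine ⟨contDiff_mckinnon, strictConvexOn_mckinnon, fun p hp v hv => ?_,
    fun p hp => ⟨fun v => ?_, (1, 0), by simp, fun w => ?_⟩⟩
  · have hcurv : 0 < if p.1 ≤ 0 then -14400 * p.1 else 36 * p.1 := by
      split_ifs with h
      · linarith [lt_of_le_of_ne h hp]
      · linarith [not_le.1 h]
    rw [hess_mckinnon]
    exact diagonal_form_pos hcurv two_pos hv
  · rw [hess_mckinnon, hp]
    simpa [mul_assoc] using mul_nonneg zero_le_two (mul_self_nonneg v.2)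
  · rw [hess_mckinnon, hp]
    simp
end
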